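/- Let Π_F⁻ be the fence program Π_F without the fact Location(sea) (the cottage is not by the sea, but there is a fence, i.e. Do(have_fence) is a fact). Then every answer set of Π_F⁻ contains ¬F(have_fence) and does not contain F(have_fence), and every optimal answer set of (Π_F⁻, W_F) contains the contrary-to-duty obligation O(have_white_fence) together with Do(have_white_fence). -/
import Mathlib


namespace ASP

/-- Atoms: the predicates of the common core applied to a constant. -/
inductive Atom (C : Type) where
  | act : C → Atom C
  | O : C → Atom C
  | F : C → Atom C
  | Do : C → Atom C
  | Dia : C → Atom C
  | Happens : C → Atom C
  | Location : C → Atom C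
  deriving DecidableEq

/-- A literal is an atom or its strong negation. -/
inductive Lit (C : Type) where
  | pos : Atom C → Lit C
  | neg : Atom C → Lit C
  deriving DecidableEq

/-- A ground rule: head, positive body, default-negated body. -/
structure Rule (C : Type) where
  head : Set (Lit C)
  pos : Set (Lit C)
  neg : Set (Lit C)

variable {C : Type}

/-- S satisfies the body of r: pos(r) ⊆ S and neg(r) ∩ S = ∅. -/
def SatBody (S : Set (Lit C)) (r : Rule C) : Prop :=
  r.pos ⊆ S ∧ r.neg ∩ S = ∅

/-- S satisfies the head of r: H(r) ∩ S ≠ ∅. -/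
def SatHead (S : Set (Lit C)) (r : Rule C) : Prop :=
  (r.head ∩ S).Nonempty

/-- S satisfies a rule r: if S satisfies the body then S satisfies the head. -/
def Satisfies (S : Set (Lit C)) (r : Rule C) : Prop :=
  SatBody S r → SatHead S r

/-- A set of literals is consistent if it contains no atom together with
its strong negation. -/
def Consistent (S : Set (Lit C)) : Prop :=
  ∀ p : Atom C, ¬ (Lit.pos p ∈ S ∧ Lit.neg p ∈ S)

/-- The reduct Π(S): the rules of Π whose body is satisfied by S. -/
def reduct (P : Set (Rule C)) (S : Set (Lit C)) : Set (Rule C) :=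
  {r ∈ P | SatBody S r}

/-- S is an answer set of Π iff S is consistent, S satisfies the head of every
rule in the reduct Π(S), and no proper subset of S satisfies every rule of Π(S). -/
def IsAnswerSet (P : Set (Rule C)) (S : Set (Lit C)) : Prop :=
  Consistent S ∧ (∀ r ∈ reduct P S, SatHead S r) ∧
    ∀ S' : Set (Lit C), S' ⊂ S → ¬ (∀ r ∈ reduct P S, Satisfies S' r)

/-- The common core program CC(a): the fact act(a) and rules (1)–(9). -/
def CC (a : C) : Set (Rule C) :=
  { ⟨{.pos (.act a)}, ∅, ∅⟩,                                      -- fact act(a)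
    ⟨{.pos (.O a), .neg (.O a)}, {.pos (.act a)}, ∅⟩,             -- (1)
    ⟨{.pos (.F a), .neg (.F a)}, {.pos (.act a)}, ∅⟩,             -- (2)
    ⟨∅, {.pos (.O a), .neg (.Dia a)}, ∅⟩,                         -- (3)
    ⟨{.neg (.Dia a)}, {.neg (.Do a), .pos (.act a)}, ∅⟩,          -- (4)
    ⟨∅, {.pos (.O a), .pos (.F a)}, ∅⟩,                           -- (5)
    ⟨{.pos (.Do a), .neg (.Do a)}, {.pos (.act a)}, ∅⟩,           -- (6)
    ⟨∅, {.pos (.F a), .pos (.Do a)}, ∅⟩,                          -- (7)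
    ⟨{.pos (.Happens a)}, {.pos (.Do a)}, ∅⟩,                     -- (8)
    ⟨∅, {.pos (.Do a), .neg (.Dia a)}, ∅⟩ }                       -- (9)

def A1 (a : C) : Set (Lit C) :=
  {.pos (.act a), .pos (.O a), .neg (.F a), .pos (.Do a), .pos (.Happens a)}

def A2 (a : C) : Set (Lit C) :=
  {.pos (.act a), .pos (.F a), .neg (.O a), .neg (.Do a), .neg (.Dia a)}

def A3 (a : C) : Set (Lit C) :=
  {.pos (.act a), .neg (.F a), .neg (.O a), .neg (.Do a), .neg (.Dia a)}

def A4 (a : C) : Set (Lit C) :=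
  {.pos (.act a), .neg (.F a), .neg (.O a), .pos (.Do a), .pos (.Happens a)}

/-- A weak constraint: body (pos, neg), weight w and level l. -/
structure WeakConstraint (C : Type) where
  pos : Finset (Lit C)
  neg : Finset (Lit C)
  w : ℕ
  l : ℕ
  deriving DecidableEq

/-- S violates a weak constraint c iff pos(c) ⊆ S and neg(c) ∩ S = ∅. -/
def Violates (S : Set (Lit C)) (c : WeakConstraint C) : Prop :=
  ↑c.pos ⊆ S ∧ ↑c.neg ∩ S = ∅

open Classical in
/-- The penalty of S at level lvl: the sum of the weights of the violated
weak constraints of level lvl. -/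
noncomputable def penalty (W : Finset (WeakConstraint C)) (S : Set (Lit C))
    (lvl : ℕ) : ℕ :=
  ∑ c ∈ W, if c.l = lvl ∧ Violates S c then c.w else 0

/-- S is an optimal answer set of Π w.r.t. W iff S is an answer set of Π and
there is no answer set S' of Π and level lvl with strictly smaller penalty at
lvl and equal penalties at all higher levels. -/
def IsOptimalAnswerSet (P : Set (Rule C)) (W : Finset (WeakConstraint C))
    (S : Set (Lit C)) : Prop :=
  IsAnswerSet P S ∧
    ¬ ∃ (S' : Set (Lit C)) (lvl : ℕ), IsAnswerSet P S' ∧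
        penalty W S' lvl < penalty W S lvl ∧
        ∀ l', lvl < l' → penalty W S' l' = penalty W S l'

variable [DecidableEq C]

/-- WC(a): the weak constraints ':~ O(a) [1:1]' and ':~ F(a) [1:1]'. -/
def WC (a : C) : Finset (WeakConstraint C) :=
  { ⟨{.pos (.O a)}, ∅, 1, 1⟩, ⟨{.pos (.F a)}, ∅, 1, 1⟩ }


/-- The constants used in the concrete examples. -/
inductive Const where
  | mail | burn | meet | help | emergency | have_fence | have_white_fence | sea
  deriving DecidableEq


/-- The fence program without the fact Location(sea) (the cottage is not by
the sea, but there is a fence): CC(have_fence) ∪ CC(have_white_fence)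
together with the fact Do(have_fence). -/
def FenceProgramNoSea : Set (Rule Const) :=
  CC Const.have_fence ∪ CC Const.have_white_fence ∪
    { ⟨{.pos (.Do .have_fence)}, ∅, ∅⟩ }

/-- The weak constraints of the fence program. -/
def FenceW : Finset (WeakConstraint Const) :=
  WC Const.have_fence ∪ WC Const.have_white_fence ∪
    { ⟨{.neg (.F .have_fence)}, {.pos (.Location .sea)}, 1, 2⟩,
      ⟨{.pos (.Do .have_fence), .neg (.O .have_white_fence)},
        {.pos (.Location .sea)}, 1, 2⟩ }


def Sstar : Set (Lit Const) := A4 Const.have_fence ∪ A1 Const.have_white_fence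

set_option maxHeartbeats 2000000 in
lemma Sstar_consistent : Consistent Sstar := by
  intro p
  cases p <;> rename_i c <;> cases c <;>
    rintro ⟨h1, h2⟩ <;>
    simp only [Sstar, A4, A1, Set.mem_union, Set.mem_insert_iff, Set.mem_singleton_iff] at h1 h2 <;>
    simp at h1 h2
set_option maxHeartbeats 2000000 in
lemma Sstar_heads : ∀ r ∈ reduct FenceProgramNoSea Sstar, SatHead Sstar r := by
  rintro r ⟨hr, hb⟩
  simp only [FenceProgramNoSea, CC, Set.mem_union, Set.mem_insert_iff,
    Set.mem_singleton_iff] at hr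
  rcases hr with ((rfl|rfl|rfl|rfl|rfl|rfl|rfl|rfl|rfl|rfl)|(rfl|rfl|rfl|rfl|rfl|rfl|rfl|rfl|rfl|rfl))|rfl <;>
    revert hb <;>
    simp only [SatBody, SatHead, Set.inter_nonempty, Set.insert_subset_iff,
      Set.singleton_subset_iff, Set.empty_subset, Set.empty_inter, Set.mem_insert_iff,
      Set.mem_singleton_iff, Set.mem_empty_iff_false, Sstar, A4, A1, Set.mem_union,
      and_true, true_and, exists_eq_or_imp, exists_eq_left] <;>
    simp <;> try tauto
lemma sathead_single {S : Set (Lit Const)} {a : Lit Const} {p n : Set (Lit Const)}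
    (h : SatHead S ⟨{a}, p, n⟩) : a ∈ S := by
  obtain ⟨x, hx1, hx2⟩ := h
  simp only [Set.mem_singleton_iff] at hx1
  rwa [hx1] at hx2

lemma sathead_pair {S : Set (Lit Const)} {a b : Lit Const} {p n : Set (Lit Const)}
    (h : SatHead S ⟨{a, b}, p, n⟩) : a ∈ S ∨ b ∈ S := by
  obtain ⟨x, hx1, hx2⟩ := h
  simp only [Set.mem_insert_iff, Set.mem_singleton_iff] at hx1
  rcases hx1 with rfl | rfl
  · exact Or.inl hx2
  · exact Or.inr hx2

set_option maxHeartbeats 2000000 in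
lemma Sstar_min : ∀ S' : Set (Lit Const), S' ⊂ Sstar →
    ¬ (∀ r ∈ reduct FenceProgramNoSea Sstar, Satisfies S' r) := by
  rintro S' hlt hsat
  have hsub : S' ⊆ Sstar := hlt.subset
  have hfact : ∀ l : Lit Const, (⟨{l}, ∅, ∅⟩ : Rule Const) ∈ FenceProgramNoSea →
      l ∈ S' := fun l hmem =>
    sathead_single (hsat _ ⟨hmem, by simp [SatBody]⟩ (by simp [SatBody]))
  have hactf : Lit.pos (Atom.act Const.have_fence) ∈ S' :=
    hfact _ (Or.inl (Or.inl (by simp [CC])))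
  have hactw : Lit.pos (Atom.act Const.have_white_fence) ∈ S' :=
    hfact _ (Or.inl (Or.inr (by simp [CC])))
  have hdof : Lit.pos (Atom.Do Const.have_fence) ∈ S' := hfact _ (Or.inr rfl)
  have hstep : ∀ a b c : Lit Const, c ∈ S' →
      (⟨{a, b}, {c}, ∅⟩ : Rule Const) ∈ FenceProgramNoSea →
      SatBody Sstar (⟨{a, b}, {c}, ∅⟩ : Rule Const) → a ∈ S' ∨ b ∈ S' := by
    intro a b c hc hmem hbS
    exact sathead_pair (hsat _ ⟨hmem, hbS⟩ ⟨by simp [Set.singleton_subset_iff, hc], by simp⟩)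
  have hnotstar : ∀ x : Lit Const, x ∈ S' → x ∉ Sstar → False := fun x h1 h2 => h2 (hsub h1)
  have hnOf : Lit.neg (Atom.O Const.have_fence) ∈ S' := by
    refine (hstep (Lit.pos (Atom.O Const.have_fence)) _ _ hactf
      (Or.inl (Or.inl (by simp [CC])))
      ⟨by simp [Set.singleton_subset_iff, Sstar, A4, A1], by simp⟩).resolve_left ?_
    intro h
    exact hnotstar _ h (by simp [Sstar, A4, A1])
  have hnFf : Lit.neg (Atom.F Const.have_fence) ∈ S' := by
    refine (hstep (Lit.pos (Atom.F Const.have_fence)) _ _ hactf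
      (Or.inl (Or.inl (by simp [CC])))
      ⟨by simp [Set.singleton_subset_iff, Sstar, A4, A1], by simp⟩).resolve_left ?_
    intro h
    exact hnotstar _ h (by simp [Sstar, A4, A1])
  have hOw : Lit.pos (Atom.O Const.have_white_fence) ∈ S' := by
    refine (hstep _ (Lit.neg (Atom.O Const.have_white_fence)) _ hactw
      (Or.inl (Or.inr (by simp [CC])))
      ⟨by simp [Set.singleton_subset_iff, Sstar, A4, A1], by simp⟩).resolve_right ?_
    intro h
    exact hnotstar _ h (by simp [Sstar, A4, A1])
  have hnFw : Lit.neg (Atom.F Const.have_white_fence) ∈ S' := by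
    refine (hstep (Lit.pos (Atom.F Const.have_white_fence)) _ _ hactw
      (Or.inl (Or.inr (by simp [CC])))
      ⟨by simp [Set.singleton_subset_iff, Sstar, A4, A1], by simp⟩).resolve_left ?_
    intro h
    exact hnotstar _ h (by simp [Sstar, A4, A1])
  have hdow : Lit.pos (Atom.Do Const.have_white_fence) ∈ S' := by
    refine (hstep _ (Lit.neg (Atom.Do Const.have_white_fence)) _ hactw
      (Or.inl (Or.inr (by simp [CC])))
      ⟨by simp [Set.singleton_subset_iff, Sstar, A4, A1], by simp⟩).resolve_right ?_
    intro h
    exact hnotstar _ h (by simp [Sstar, A4, A1])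
  have hhapf : Lit.pos (Atom.Happens Const.have_fence) ∈ S' :=
    sathead_single (hsat (⟨{.pos (.Happens Const.have_fence)},
        {.pos (.Do Const.have_fence)}, ∅⟩ : Rule Const)
      ⟨Or.inl (Or.inl (by simp [CC])),
        ⟨by simp [Set.singleton_subset_iff, Sstar, A4, A1], by simp⟩⟩
      ⟨by simp [Set.singleton_subset_iff, hdof], by simp⟩)
  have hhapw : Lit.pos (Atom.Happens Const.have_white_fence) ∈ S' :=
    sathead_single (hsat (⟨{.pos (.Happens Const.have_white_fence)},
        {.pos (.Do Const.have_white_fence)}, ∅⟩ : Rule Const)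
      ⟨Or.inl (Or.inr (by simp [CC])),
        ⟨by simp [Set.singleton_subset_iff, Sstar, A4, A1], by simp⟩⟩
      ⟨by simp [Set.singleton_subset_iff, hdow], by simp⟩)
  refine hlt.not_subset ?_
  intro x hx
  simp only [Sstar, A4, A1, Set.mem_union, Set.mem_insert_iff, Set.mem_singleton_iff] at hx
  rcases hx with (rfl|rfl|rfl|rfl|rfl)|(rfl|rfl|rfl|rfl|rfl) <;> assumption

lemma Sstar_answer : IsAnswerSet FenceProgramNoSea Sstar :=
  ⟨Sstar_consistent, Sstar_heads, Sstar_min⟩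
variable {S : Set (Lit Const)}

lemma head_sat (hS : IsAnswerSet FenceProgramNoSea S) {r : Rule Const}
    (hr : r ∈ FenceProgramNoSea) (hb : SatBody S r) : SatHead S r :=
  hS.2.1 r ⟨hr, hb⟩

lemma act_f_mem (hS : IsAnswerSet FenceProgramNoSea S) :
    Lit.pos (Atom.act Const.have_fence) ∈ S := by
  have h := head_sat hS (r := ⟨{.pos (.act Const.have_fence)}, ∅, ∅⟩)
    (Or.inl (Or.inl (by simp [CC]))) (by simp [SatBody])
  exact sathead_single h

lemma act_w_mem (hS : IsAnswerSet FenceProgramNoSea S) :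
    Lit.pos (Atom.act Const.have_white_fence) ∈ S := by
  have h := head_sat hS (r := ⟨{.pos (.act Const.have_white_fence)}, ∅, ∅⟩)
    (Or.inl (Or.inr (by simp [CC]))) (by simp [SatBody])
  exact sathead_single h

lemma do_f_mem (hS : IsAnswerSet FenceProgramNoSea S) :
    Lit.pos (Atom.Do Const.have_fence) ∈ S := by
  have h := head_sat hS (r := ⟨{.pos (.Do Const.have_fence)}, ∅, ∅⟩)
    (Or.inr (by rfl)) (by simp [SatBody])
  exact sathead_single h

lemma Ff_not_mem (hS : IsAnswerSet FenceProgramNoSea S) :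
    Lit.pos (Atom.F Const.have_fence) ∉ S := by
  intro hF
  have h := head_sat hS
    (r := ⟨∅, {.pos (.F Const.have_fence), .pos (.Do Const.have_fence)}, ∅⟩)
    (Or.inl (Or.inl (by simp [CC])))
    ⟨by simp [Set.insert_subset_iff, Set.singleton_subset_iff, hF, do_f_mem hS], by simp⟩
  simp [SatHead] at h

lemma nFf_mem (hS : IsAnswerSet FenceProgramNoSea S) :
    Lit.neg (Atom.F Const.have_fence) ∈ S := by
  have h := head_sat hS
    (r := ⟨{.pos (.F Const.have_fence), .neg (.F Const.have_fence)},
      {.pos (.act Const.have_fence)}, ∅⟩)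
    (Or.inl (Or.inl (by simp [CC])))
    ⟨by simp [Set.singleton_subset_iff, act_f_mem hS], by simp⟩
  exact (sathead_pair h).resolve_left (Ff_not_mem hS)

lemma Ow_or_nOw (hS : IsAnswerSet FenceProgramNoSea S) :
    Lit.pos (Atom.O Const.have_white_fence) ∈ S ∨
      Lit.neg (Atom.O Const.have_white_fence) ∈ S := by
  have h := head_sat hS
    (r := ⟨{.pos (.O Const.have_white_fence), .neg (.O Const.have_white_fence)},
      {.pos (.act Const.have_white_fence)}, ∅⟩)
    (Or.inl (Or.inr (by simp [CC])))
    ⟨by simp [Set.singleton_subset_iff, act_w_mem hS], by simp⟩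
  exact sathead_pair h

lemma do_w_of_Ow (hS : IsAnswerSet FenceProgramNoSea S)
    (hO : Lit.pos (Atom.O Const.have_white_fence) ∈ S) :
    Lit.pos (Atom.Do Const.have_white_fence) ∈ S := by
  have hnDia : Lit.neg (Atom.Dia Const.have_white_fence) ∉ S := by
    intro hD
    have h := head_sat hS
      (r := ⟨∅, {.pos (.O Const.have_white_fence), .neg (.Dia Const.have_white_fence)}, ∅⟩)
      (Or.inl (Or.inr (by simp [CC])))
      ⟨by simp [Set.insert_subset_iff, Set.singleton_subset_iff, hO, hD], by simp⟩
    simp [SatHead] at h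
  have hnDo : Lit.neg (Atom.Do Const.have_white_fence) ∉ S := by
    intro hD
    have h := head_sat hS
      (r := ⟨{.neg (.Dia Const.have_white_fence)},
        {.neg (.Do Const.have_white_fence), .pos (.act Const.have_white_fence)}, ∅⟩)
      (Or.inl (Or.inr (by simp [CC])))
      ⟨by simp [Set.insert_subset_iff, Set.singleton_subset_iff, hD, act_w_mem hS], by simp⟩
    exact hnDia (sathead_single h)
  have h := head_sat hS
    (r := ⟨{.pos (.Do Const.have_white_fence), .neg (.Do Const.have_white_fence)},
      {.pos (.act Const.have_white_fence)}, ∅⟩)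
    (Or.inl (Or.inr (by simp [CC])))
    ⟨by simp [Set.singleton_subset_iff, act_w_mem hS], by simp⟩
  exact (sathead_pair h).resolve_right hnDo

lemma loc_not_in_heads : ∀ r ∈ FenceProgramNoSea,
    Lit.pos (Atom.Location Const.sea) ∉ r.head := by
  intro r hr
  simp only [FenceProgramNoSea, CC, Set.mem_union, Set.mem_insert_iff,
    Set.mem_singleton_iff] at hr
  rcases hr with ((rfl|rfl|rfl|rfl|rfl|rfl|rfl|rfl|rfl|rfl)|(rfl|rfl|rfl|rfl|rfl|rfl|rfl|rfl|rfl|rfl))|rfl <;>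
    simp

lemma loc_not_mem (hS : IsAnswerSet FenceProgramNoSea S) :
    Lit.pos (Atom.Location Const.sea) ∉ S := by
  intro hL
  refine hS.2.2 (S \ {Lit.pos (Atom.Location Const.sea)}) ?_ ?_
  · refine ⟨Set.diff_subset, fun hsub => ?_⟩
    exact (hsub hL).2 rfl
  · rintro r ⟨hr, hb⟩ _
    obtain ⟨x, hx1, hx2⟩ := hS.2.1 r ⟨hr, hb⟩
    refine ⟨x, hx1, hx2, ?_⟩
    intro hxe
    rw [Set.mem_singleton_iff] at hxe
    exact loc_not_in_heads r hr (hxe ▸ hx1)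
lemma penalty_high (T : Set (Lit Const)) {l : ℕ} (hl : 2 < l) :
    penalty FenceW T l = 0 := by
  apply Finset.sum_eq_zero
  intro c hc
  fin_cases hc <;> refine if_neg ?_ <;> rintro ⟨h, -⟩ <;> simp at h <;> omega

lemma penalty_lt (hS : IsAnswerSet FenceProgramNoSea S)
    (hnOw : Lit.neg (Atom.O Const.have_white_fence) ∈ S) :
    penalty FenceW Sstar 2 < penalty FenceW S 2 := by
  have hLocS : Lit.pos (Atom.Location Const.sea) ∉ S := loc_not_mem hS
  have hLocStar : Lit.pos (Atom.Location Const.sea) ∉ Sstar := by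
    simp [Sstar, A4, A1]
  have hv30 : Violates S ⟨{.neg (.F .have_fence)}, {.pos (.Location .sea)}, 1, 2⟩ :=
    ⟨by simp [Set.singleton_subset_iff, nFf_mem hS],
     by simp [Set.singleton_inter_eq_empty, hLocS]⟩
  have hv30s : Violates Sstar ⟨{.neg (.F .have_fence)}, {.pos (.Location .sea)}, 1, 2⟩ :=
    ⟨by simp [Set.singleton_subset_iff, Sstar, A4, A1],
     by simp [Set.singleton_inter_eq_empty, hLocStar]⟩
  have hv31 : Violates S ⟨{.pos (.Do .have_fence), .neg (.O .have_white_fence)},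
      {.pos (.Location .sea)}, 1, 2⟩ :=
    ⟨by simp [Set.insert_subset_iff, Set.singleton_subset_iff, do_f_mem hS, hnOw],
     by simp [Set.singleton_inter_eq_empty, hLocS]⟩
  have hnv31 : ¬ ((2 : ℕ) = 2 ∧ Violates Sstar
      ⟨{.pos (.Do .have_fence), .neg (.O .have_white_fence)},
        {.pos (.Location .sea)}, 1, 2⟩) := by
    rintro ⟨-, hv', -⟩
    have h2 : Lit.neg (Atom.O Const.have_white_fence) ∈ Sstar := hv' (by simp)
    simp [Sstar, A4, A1] at h2
  apply Finset.sum_lt_sum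
  · intro c hc
    fin_cases hc
    · refine le_of_eq ?_
      rw [if_neg, if_neg] <;> rintro ⟨h, -⟩ <;> simp at h
    · refine le_of_eq ?_
      rw [if_neg, if_neg] <;> rintro ⟨h, -⟩ <;> simp at h
    · refine le_of_eq ?_
      rw [if_neg, if_neg] <;> rintro ⟨h, -⟩ <;> simp at h
    · refine le_of_eq ?_
      rw [if_neg, if_neg] <;> rintro ⟨h, -⟩ <;> simp at h
    · rw [if_pos ⟨rfl, hv30s⟩, if_pos ⟨rfl, hv30⟩]
    · rw [if_neg hnv31, if_pos ⟨rfl, hv31⟩]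
      simp
  · refine ⟨⟨{.pos (.Do .have_fence), .neg (.O .have_white_fence)},
      {.pos (.Location .sea)}, 1, 2⟩, ?_, ?_⟩
    · simp [FenceW, WC]
    · rw [if_neg hnv31, if_pos ⟨rfl, hv31⟩]
      simp
/-- for the fence program without Location(sea), every answer
set contains ¬F(have_fence) and not F(have_fence), and every optimal answer
set contains the contrary-to-duty obligation O(have_white_fence) together
with Do(have_white_fence). -/
theorem stmt19 :
    (∀ S : Set (Lit Const), IsAnswerSet FenceProgramNoSea S →
      Lit.neg (Atom.F Const.have_fence) ∈ S ∧
        Lit.pos (Atom.F Const.have_fence) ∉ S) ∧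
    (∀ S : Set (Lit Const), IsOptimalAnswerSet FenceProgramNoSea FenceW S →
      Lit.pos (Atom.O Const.have_white_fence) ∈ S ∧
        Lit.pos (Atom.Do Const.have_white_fence) ∈ S) := by
  constructor
  · intro S hS
    exact ⟨nFf_mem hS, Ff_not_mem hS⟩
  · rintro S ⟨hAS, hNo⟩
    have hOw : Lit.pos (Atom.O Const.have_white_fence) ∈ S := by
      by_contra hO
      have hnOw : Lit.neg (Atom.O Const.have_white_fence) ∈ S :=
        (Ow_or_nOw hAS).resolve_left hO
      exact hNo ⟨Sstar, 2, Sstar_answer, penalty_lt hAS hnOw,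
        fun l' hl' => by rw [penalty_high _ hl', penalty_high _ hl']⟩
    exact ⟨hOw, do_w_of_Ow hAS hOw⟩

end ASP
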